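/- arXiv:2301.00793 — 3 statements merged into one kernel-verified Lean document; each statement's English description precedes it below -/
import Mathlib

section
/- Let C be a symmetric n×n real matrix all of whose eigenvalues lie in the interval [-1,1]. If the first k diagonal entries of C are each greater than or equal to 1, then the upper-left k×k block of C equals the k×k identity matrix. -/
open Matrix

/-!
`1 - C` has spectrum `1 - σ(C) ⊆ [0, ∞)`, so it is positive semidefinite, and its first `k`
diagonal entries are `≤ 0`, hence `0`. A positive semidefinite matrix with a vanishing diagonal
entry `A j j = eⱼ⋆ A eⱼ` kills `eⱼ`, so the whole column `j` of `1 - C` vanishes.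
-/

open scoped ComplexOrder in
theorem Matrix.PosSemidef.apply_eq_zero_of_diag_eq_zero {n 𝕜 : Type*} [Fintype n] [DecidableEq n]
    [RCLike 𝕜] {A : Matrix n n 𝕜} (hA : A.PosSemidef) {j : n} (hjj : A j j = 0) (i : n) :
    A i j = 0 := by
  have hcol : A *ᵥ Pi.single j 1 = 0 :=
    (hA.dotProduct_mulVec_zero_iff _).mp (by simpa [mulVec_single_one] using hjj)
  simpa [mulVec_single_one] using congrFun hcol i

theorem Matrix.IsHermitian.posSemidef_one_sub {n : Type*} [Fintype n] [DecidableEq n]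
    {C : Matrix n n ℝ} (hC : C.IsHermitian) (hspec : spectrum ℝ C ⊆ Set.Iic 1) :
    (1 - C).PosSemidef := by
  refine posSemidef_iff_isHermitian_and_spectrum_nonneg.mpr ⟨isHermitian_one.sub hC, ?_⟩
  rw [← map_one (algebraMap ℝ (Matrix n n ℝ)), ← spectrum.singleton_sub_eq]
  rintro _ ⟨_, rfl, μ, hμ, rfl⟩
  simpa using hspec hμ

theorem stmt_0_general (n k : ℕ) (C : Matrix (Fin n) (Fin n) ℝ)
    (hsymm : C.IsSymm)
    (hspec : spectrum ℝ C ⊆ Set.Icc (-1 : ℝ) 1)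
    (hdiag : ∀ i : Fin n, (i : ℕ) < k → 1 ≤ C i i) :
    ∀ i j : Fin n, (i : ℕ) < k → (j : ℕ) < k →
      C i j = if i = j then (1 : ℝ) else 0 := by
  intro i j _ hj
  have hPSD : (1 - C).PosSemidef :=
    (isHermitian_iff_isSymm.mpr hsymm).posSemidef_one_sub
      (hspec.trans Set.Icc_subset_Iic_self)
  have hjj : (1 - C) j j = 0 :=
    le_antisymm (by simpa using hdiag j hj) hPSD.diag_nonneg
  have hij := hPSD.apply_eq_zero_of_diag_eq_zero hjj i
  rw [Matrix.sub_apply, one_apply, sub_eq_zero] at hij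
  exact hij.symm

/-- If all eigenvalues of a symmetric real matrix `C` lie in `[-1,1]` and its first `k`
diagonal entries are `≥ 1`, then its upper-left `k × k` block is the identity. -/
theorem stmt_0 (n k : ℕ) (hk : k ≤ n) (C : Matrix (Fin n) (Fin n) ℝ)
    (hsymm : C.IsSymm)
    (hspec : spectrum ℝ C ⊆ Set.Icc (-1 : ℝ) 1)
    (hdiag : ∀ i : Fin n, (i : ℕ) < k → 1 ≤ C i i) :
    ∀ i j : Fin n, (i : ℕ) < k → (j : ℕ) < k →
      C i j = if i = j then (1 : ℝ) else 0 :=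
  stmt_0_general n k C hsymm hspec hdiag
end

section
/- Let C be a symmetric n×n real matrix all of whose eigenvalues lie in [-1,1], and suppose the first k diagonal entries of C are each at least 1. Then the upper-left k×k block of C is the identity matrix and the off-diagonal block C_{1:k, k+1:n} is the zero matrix. -/
/-! Since the spectrum of `C` lies below `1`, the matrix `1 - C` is positive semidefinite. Its
diagonal entries in the first `k` rows are `≤ 0`, hence zero, and a positive semidefinite matrix
with a zero diagonal entry has the whole row through it equal to zero. So the first `k` rows of
`C` are those of the identity. -/

open Matrix
open scoped ComplexOrder

namespace Matrix

variable {𝕜 n : Type*} [RCLike 𝕜] [Fintype n]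

theorem PosSemidef.apply_eq_zero_of_diag_eq_zero_s1 {A : Matrix n n 𝕜} (hA : A.PosSemidef)
    {i : n} (hi : A i i = 0) (j : n) : A i j = 0 := by
  classical
  have hcol : A *ᵥ Pi.single i 1 = 0 :=
    (hA.dotProduct_mulVec_zero_iff (Pi.single i 1)).mp (by simp [hi])
  rw [← hA.isHermitian.apply i j, show A j i = 0 by simpa using congrFun hcol j, star_zero]

variable [DecidableEq n]

theorem IsHermitian.posSemidef_one_sub_s1 {A : Matrix n n 𝕜} (hA : A.IsHermitian)
    (hspec : spectrum ℝ A ⊆ Set.Iic 1) : (1 - A).PosSemidef := by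
  open scoped MatrixOrder in
  exact le_iff.mp (CFC.le_one (fun x hx => hspec hx) hA.isSelfAdjoint)

theorem IsHermitian.apply_eq_one_apply_of_one_le_diag {A : Matrix n n 𝕜} (hA : A.IsHermitian)
    (hspec : spectrum ℝ A ⊆ Set.Iic 1) {i : n} (hi : 1 ≤ A i i) (j : n) :
    A i j = (1 : Matrix n n 𝕜) i j := by
  have hpsd := hA.posSemidef_one_sub_s1 hspec
  have hdiag : (1 - A) i i = 0 :=
    le_antisymm (by simpa [sub_nonpos] using hi) hpsd.diag_nonneg
  exact (sub_eq_zero.mp (hpsd.apply_eq_zero_of_diag_eq_zero_s1 hdiag j)).symm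

end Matrix

theorem stmt_1_general (n k : ℕ) (C : Matrix (Fin n) (Fin n) ℝ)
    (hsymm : C.IsSymm)
    (hspec : spectrum ℝ C ⊆ Set.Icc (-1 : ℝ) 1)
    (hdiag : ∀ i : Fin n, (i : ℕ) < k → 1 ≤ C i i) :
    (∀ i j : Fin n, (i : ℕ) < k → (j : ℕ) < k →
      C i j = if i = j then (1 : ℝ) else 0) ∧
    (∀ i j : Fin n, (i : ℕ) < k → k ≤ (j : ℕ) → C i j = 0) := by
  have hrow : ∀ i : Fin n, (i : ℕ) < k → ∀ j, C i j = (1 : Matrix (Fin n) (Fin n) ℝ) i j :=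
    fun i hi => (isHermitian_iff_isSymm.mpr hsymm).apply_eq_one_apply_of_one_le_diag
      (hspec.trans Set.Icc_subset_Iic_self) (hdiag i hi)
  refine ⟨fun i j hi _ => by rw [hrow i hi j, one_apply], fun i j hi hj => ?_⟩
  rw [hrow i hi j, one_apply_ne]
  rintro rfl
  omega

/-- If all eigenvalues of a symmetric real matrix `C` lie in `[-1,1]` and its first `k`
diagonal entries are `≥ 1`, then its upper-left `k × k` block is the identity and the
off-diagonal block `C_{1:k, k+1:n}` is zero. -/
theorem stmt_1 (n k : ℕ) (hk : k ≤ n) (C : Matrix (Fin n) (Fin n) ℝ)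
    (hsymm : C.IsSymm)
    (hspec : spectrum ℝ C ⊆ Set.Icc (-1 : ℝ) 1)
    (hdiag : ∀ i : Fin n, (i : ℕ) < k → 1 ≤ C i i) :
    (∀ i j : Fin n, (i : ℕ) < k → (j : ℕ) < k →
      C i j = if i = j then (1 : ℝ) else 0) ∧
    (∀ i j : Fin n, (i : ℕ) < k → k ≤ (j : ℕ) → C i j = 0) :=
  stmt_1_general n k C hsymm hspec hdiag
end

section
/- Let β, η ∈ [0,1] and define x_u = β + η − 2βη + √((β+η−2βη)² − (β−η)²). Then x_u ≤ 1, with equality if and only if β + η = 1. -/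
/-!
With `s = β + η − 2βη` one has `1 − s = (1 − β)(1 − η) + βη ≥ 0` and the identity
`s² − (β − η)² = (1 − s)² − (β + η − 1)²`, so `x_u = s + √((1 − s)² − t²)` with `t = β + η − 1`.
Since `√(a² − t²) ≤ a` for `a ≥ 0`, with equality exactly when `t = 0`, the claim follows.
-/

namespace Real

theorem sqrt_sq_sub_sq_le {a : ℝ} (ha : 0 ≤ a) (t : ℝ) : √(a ^ 2 - t ^ 2) ≤ a :=
  (sqrt_le_left ha).2 (sub_le_self _ (sq_nonneg t))

theorem sqrt_sq_sub_sq_eq_self_iff {a t : ℝ} (ha : 0 ≤ a) (ht : t ^ 2 ≤ a ^ 2) :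
    √(a ^ 2 - t ^ 2) = a ↔ t = 0 := by
  rw [sqrt_eq_iff_eq_sq (sub_nonneg.2 ht) ha, sub_eq_self, pow_eq_zero_iff two_ne_zero]

end Real

section UnitInterval

variable {β η : ℝ}

theorem add_sub_two_mul_mul_le_one (hβ : β ∈ Set.Icc (0 : ℝ) 1) (hη : η ∈ Set.Icc (0 : ℝ) 1) :
    β + η - 2 * β * η ≤ 1 := by
  have hdecomp : 1 - (β + η - 2 * β * η) = (1 - β) * (1 - η) + β * η := by ring
  have : 0 ≤ (1 - β) * (1 - η) + β * η :=
    add_nonneg (mul_nonneg (sub_nonneg.2 hβ.2) (sub_nonneg.2 hη.2)) (mul_nonneg hβ.1 hη.1)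
  linarith

theorem sq_add_sub_one_le_sq_one_sub (hβ : β ∈ Set.Icc (0 : ℝ) 1) (hη : η ∈ Set.Icc (0 : ℝ) 1) :
    (β + η - 1) ^ 2 ≤ (1 - (β + η - 2 * β * η)) ^ 2 := by
  have hdiff : (1 - (β + η - 2 * β * η)) ^ 2 - (β + η - 1) ^ 2
      = 4 * (β * η) * ((1 - β) * (1 - η)) := by ring
  have : 0 ≤ 4 * (β * η) * ((1 - β) * (1 - η)) :=
    mul_nonneg (mul_nonneg zero_le_four (mul_nonneg hβ.1 hη.1))
      (mul_nonneg (sub_nonneg.2 hβ.2) (sub_nonneg.2 hη.2))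
  linarith

end UnitInterval

/-- For `β, η ∈ [0,1]`, the upper edge
`x_u = β + η − 2βη + √((β+η−2βη)² − (β−η)²)` satisfies `x_u ≤ 1`,
with equality iff `β + η = 1`. -/
theorem stmt_6 (β η : ℝ) (hβ : β ∈ Set.Icc (0 : ℝ) 1) (hη : η ∈ Set.Icc (0 : ℝ) 1) :
    β + η - 2 * β * η + Real.sqrt ((β + η - 2 * β * η) ^ 2 - (β - η) ^ 2) ≤ 1 ∧
    (β + η - 2 * β * η + Real.sqrt ((β + η - 2 * β * η) ^ 2 - (β - η) ^ 2) = 1 ↔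
      β + η = 1) := by
  set s := β + η - 2 * β * η
  have hD : s ^ 2 - (β - η) ^ 2 = (1 - s) ^ 2 - (β + η - 1) ^ 2 := by ring
  have ha : 0 ≤ 1 - s := sub_nonneg.2 (add_sub_two_mul_mul_le_one hβ hη)
  rw [hD]
  refine ⟨by linarith [Real.sqrt_sq_sub_sq_le ha (β + η - 1)], ?_⟩
  rw [← eq_sub_iff_add_eq', Real.sqrt_sq_sub_sq_eq_self_iff ha (sq_add_sub_one_le_sq_one_sub hβ hη),
    sub_eq_zero]
end
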